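/- arXiv:2101.07623 — 7 statements merged into one kernel-verified Lean document; each statement's English description precedes it below -/
import Mathlib

section
/- Let P ⊂ ℂ² be a real 2-dimensional linear subspace with orthonormal basis (t₁, t₂) and holomorphic angle θ (so that J t₁ = cos(θ) t₂ + sin(θ) n with n a unit vector in P^⊥). Then for every vector t ∈ P, the norm of the orthogonal projection of J t onto P^⊥ equals sin(θ)·‖t‖. In particular, the map t ↦ proj_{P^⊥}(J t) from P to P^⊥ is a similarity with factor sin θ. -/
open scoped RealInnerProductSpace

/-- ℂ² viewed as a real 4-dimensional Euclidean (inner product) space. -/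
noncomputable abbrev C2 : Type := WithLp 2 (ℂ × ℂ)

/-- Multiplication by `i` on ℂ². -/
noncomputable def Jc (v : C2) : C2 := Complex.I • v

/-! Multiplication by `i` is a skew-adjoint isometry `J`, so `⟪J t, t⟫ = 0` and the compression of
`J` to the plane `P` is `cos θ` times the rotation of `P` by a right angle. Hence the component of
`J t` in `P` has norm `|cos θ| ‖t‖`, and Pythagoras with `‖J t‖ = ‖t‖` leaves
`‖proj_{P^⊥} (J t)‖² = sin² θ ‖t‖²`, where `sin θ ≥ 0` because `θ ∈ [0, π]`. -/

section SkewOperator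

variable {E : Type*} [NormedAddCommGroup E] [InnerProductSpace ℝ E] {J : E →ₗ[ℝ] E}

theorem inner_apply_self_eq_zero_of_skew (hJ : ∀ v w, ⟪J v, w⟫ = -⟪v, J w⟫) (v : E) :
    ⟪J v, v⟫ = 0 := by
  linarith [hJ v v, real_inner_comm (J v) v]

variable {t₁ t₂ : E} {P : Submodule ℝ E} [P.HasOrthogonalProjection]

theorem norm_sq_smul_add_smul_of_orthonormal (h₁ : ‖t₁‖ = 1) (h₂ : ‖t₂‖ = 1) (h₁₂ : ⟪t₁, t₂⟫ = 0)
    (a b : ℝ) : ‖a • t₁ + b • t₂‖ ^ 2 = a ^ 2 + b ^ 2 := by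
  rw [norm_add_sq_real, norm_smul, norm_smul, real_inner_smul_left, real_inner_smul_right, h₁, h₂,
    h₁₂, Real.norm_eq_abs, Real.norm_eq_abs]
  simp

theorem starProjection_apply_of_skew (hJ : ∀ v w, ⟪J v, w⟫ = -⟪v, J w⟫)
    (hP : P = Submodule.span ℝ {t₁, t₂})
    (h₁ : ‖t₁‖ = 1) (h₂ : ‖t₂‖ = 1) (h₁₂ : ⟪t₁, t₂⟫ = 0) (a b : ℝ) :
    P.starProjection (J (a • t₁ + b • t₂)) =
      ⟪J t₁, t₂⟫ • (a • t₂ - b • t₁) := by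
  subst hP
  refine Submodule.eq_starProjection_of_mem_of_inner_eq_zero ?_ fun w hw => ?_
  · exact Submodule.smul_mem _ _ (Submodule.sub_mem _
      (Submodule.smul_mem _ _ (Submodule.subset_span (by simp)))
      (Submodule.smul_mem _ _ (Submodule.subset_span (by simp))))
  obtain ⟨x, y, rfl⟩ := Submodule.mem_span_pair.mp hw
  have h₁₁ : ⟪t₁, t₁⟫ = 1 := by rw [real_inner_self_eq_norm_sq, h₁]; norm_num
  have h₂₂ : ⟪t₂, t₂⟫ = 1 := by rw [real_inner_self_eq_norm_sq, h₂]; norm_num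
  have h₂₁ : ⟪J t₂, t₁⟫ = -⟪J t₁, t₂⟫ := by
    rw [hJ, real_inner_comm]
  simp only [map_add, map_smul, inner_add_left, inner_add_right, inner_sub_left, inner_smul_left,
    inner_smul_right, RCLike.conj_to_real, inner_apply_self_eq_zero_of_skew hJ, h₁₁, h₂₂, h₁₂,
    real_inner_comm t₁ t₂, h₂₁]
  ring

theorem norm_sq_starProjection_orthogonal_apply_of_skew
    (hJ : ∀ v w, ⟪J v, w⟫ = -⟪v, J w⟫) (hJ_norm : ∀ v, ‖J v‖ = ‖v‖)
    (hP : P = Submodule.span ℝ {t₁, t₂})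
    (h₁ : ‖t₁‖ = 1) (h₂ : ‖t₂‖ = 1) (h₁₂ : ⟪t₁, t₂⟫ = 0) (a b : ℝ) :
    ‖Pᗮ.starProjection (J (a • t₁ + b • t₂))‖ ^ 2 =
      (1 - ⟪J t₁, t₂⟫ ^ 2) * ‖a • t₁ + b • t₂‖ ^ 2 := by
  have key := P.norm_sq_eq_add_norm_sq_starProjection (J (a • t₁ + b • t₂))
  rw [starProjection_apply_of_skew hJ hP h₁ h₂ h₁₂, hJ_norm, norm_smul, mul_pow,
    Real.norm_eq_abs, sq_abs, sub_eq_add_neg, ← neg_smul,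
    norm_sq_smul_add_smul_of_orthonormal h₂ h₁ (by rwa [real_inner_comm])] at key
  rw [norm_sq_smul_add_smul_of_orthonormal h₁ h₂ h₁₂] at key ⊢
  linear_combination -key

end SkewOperator

theorem Complex.real_inner_I_mul_left (z w : ℂ) : ⟪I * z, w⟫ = -⟪z, I * w⟫ := by
  simp [Complex.inner]
  ring

noncomputable def JcLinear : C2 →ₗ[ℝ] C2 := DistribSMul.toLinearMap ℝ C2 Complex.I

theorem JcLinear_apply (v : C2) : JcLinear v = Jc v := rfl

theorem inner_Jc_left (v w : C2) : ⟪Jc v, w⟫ = -⟪v, Jc w⟫ := by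
  simp only [Jc, WithLp.prod_inner_apply, WithLp.ofLp_smul, Prod.smul_fst, Prod.smul_snd,
    smul_eq_mul, Complex.real_inner_I_mul_left]
  ring

theorem norm_Jc (v : C2) : ‖Jc v‖ = ‖v‖ := by
  rw [Jc, norm_smul, Complex.norm_I, one_mul]

theorem stmt_1_general (P : Submodule ℝ C2) (t₁ t₂ n : C2) (θ : ℝ)
    (hθ : θ ∈ Set.Icc 0 Real.pi)
    (hspan : P = Submodule.span ℝ {t₁, t₂})
    (hn₁ : ‖t₁‖ = 1) (hn₂ : ‖t₂‖ = 1) (ho : ⟪t₁, t₂⟫ = 0)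
    (hn : n ∈ Pᗮ)
    (hJ : Jc t₁ = Real.cos θ • t₂ + Real.sin θ • n) :
    ∀ t ∈ P, ‖(Submodule.orthogonalProjectionOnto Pᗮ (Jc t) : C2)‖ = Real.sin θ * ‖t‖ := by
  intro t ht
  obtain ⟨a, b, rfl⟩ := Submodule.mem_span_pair.mp (hspan ▸ ht)
  have hcos : ⟪Jc t₁, t₂⟫ = Real.cos θ := by
    have hn_t₂ : ⟪n, t₂⟫ = 0 :=
      inner_eq_zero_symm.mp (hn t₂ (hspan ▸ Submodule.subset_span (by simp)))
    rw [hJ, inner_add_left, real_inner_smul_left, real_inner_smul_left, real_inner_self_eq_norm_sq,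
      hn₂, hn_t₂]
    ring
  have hsq := norm_sq_starProjection_orthogonal_apply_of_skew (J := JcLinear)
    inner_Jc_left norm_Jc hspan hn₁ hn₂ ho a b
  simp only [JcLinear_apply] at hsq
  rw [hcos, ← Real.sin_sq, ← mul_pow] at hsq
  rw [Submodule.coe_orthogonalProjectionOnto_apply]
  exact (pow_left_inj₀ (norm_nonneg _)
    (mul_nonneg (Real.sin_nonneg_of_nonneg_of_le_pi hθ.1 hθ.2) (norm_nonneg _)) two_ne_zero).mp hsq

/-- if `P` is a real 2-plane in ℂ² with orthonormal basis `(t₁, t₂)` and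
holomorphic angle `θ` (so `J t₁ = cos θ • t₂ + sin θ • n` with `n` a unit normal),
then for every `t ∈ P` the orthogonal projection of `J t` onto `P^⊥` has norm
`sin θ * ‖t‖`; i.e. `t ↦ proj_{P^⊥}(J t)` is a similarity of factor `sin θ`. -/
theorem stmt_1 (P : Submodule ℝ C2) (t₁ t₂ n : C2) (θ : ℝ)
    (hθ : θ ∈ Set.Icc 0 Real.pi)
    (hspan : P = Submodule.span ℝ {t₁, t₂})
    (hn₁ : ‖t₁‖ = 1) (hn₂ : ‖t₂‖ = 1) (ho : ⟪t₁, t₂⟫ = 0)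
    (hn : n ∈ Pᗮ) (hnn : ‖n‖ = 1)
    (hJ : Jc t₁ = Real.cos θ • t₂ + Real.sin θ • n) :
    ∀ t ∈ P, ‖(Submodule.orthogonalProjectionOnto Pᗮ (Jc t) : C2)‖ = Real.sin θ * ‖t‖ :=
  stmt_1_general P t₁ t₂ n θ hθ hspan hn₁ hn₂ ho hn hJ
end

section
/- Let θ ∈ [0, π] and let P ⊂ ℂ² be the real 2-plane defined by y₂ = 0 and cos(θ)·y₁ + sin(θ)·x₂ = 0. Then the complex line D_λ = {y = λx} with λ = λ₁ + iλ₂ is not transverse to P if and only if cos(θ)·|λ|² = sin(θ)·λ₂. In particular, for θ ∈ (0, π/2), the set of such λ in ℂ is the Euclidean circle centered at (0, tan(θ)/2) of radius tan(θ)/2. -/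
/-!
The plane `P` is the kernel of the surjective real-linear map
`Q (x, y) = (y₂, cos θ · y₁ + sin θ · x₂)` from `ℂ²` onto `ℝ²`, so `D_λ + P = ℂ²` exactly when
`Q` is still onto `ℝ²` on `D_λ`. In the coordinates `(x₁, x₂)` of `D_λ`, `Q (x, λx)` is a
`2 × 2` real linear system with determinant `sin θ · λ₂ - cos θ · |λ|²`. For `θ ∈ (0, π/2)`,
dividing by `cos θ` turns the vanishing of this determinant into `|λ|² = tan θ · λ₂`, the circle
of centre `i tan θ / 2` through the origin.
-/

/-- The complex line `{y = l·x}` through the origin, as a real subspace of ℂ². -/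
noncomputable def lineSlope (l : ℂ) : Submodule ℝ (ℂ × ℂ) where
  carrier := {v | v.2 = l * v.1}
  add_mem' := by
    intro a b ha hb
    simp only [Set.mem_setOf_eq, Prod.fst_add, Prod.snd_add] at *
    rw [ha, hb]; ring
  zero_mem' := by simp
  smul_mem' := by
    intro r v hv
    simp only [Set.mem_setOf_eq, Prod.smul_fst, Prod.smul_snd, Complex.real_smul] at *
    rw [hv]; ring

theorem forall_exists_solution_two_iff_det_ne_zero {K : Type*} [Field K] (p q r s : K) :
    (∀ e f : K, ∃ a b : K, p * a + q * b = e ∧ r * a + s * b = f) ↔ p * s - q * r ≠ 0 := by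
  rw [← Matrix.det_fin_two_of, ← isUnit_iff_ne_zero, ← Matrix.isUnit_iff_isUnit_det,
    ← Matrix.mulVec_surjective_iff_isUnit]
  constructor
  · intro h v
    obtain ⟨a, b, hv₀, hv₁⟩ := h (v 0) (v 1)
    refine ⟨![a, b], funext fun i => ?_⟩
    fin_cases i <;> simp [Matrix.mulVec, dotProduct, hv₀, hv₁]
  · intro h e f
    obtain ⟨v, hv⟩ := h ![e, f]
    refine ⟨v 0, v 1, ?_, ?_⟩
    · simpa [Matrix.mulVec, dotProduct] using congr_fun hv 0
    · simpa [Matrix.mulVec, dotProduct] using congr_fun hv 1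

open Complex

theorem lineSlope_eq_range (l : ℂ) :
    lineSlope l = LinearMap.range (LinearMap.id.prod (LinearMap.mulLeft ℝ l)) := by
  ext v
  constructor
  · intro hv
    exact ⟨v.1, Prod.ext rfl hv.symm⟩
  · rintro ⟨x, rfl⟩
    rfl

noncomputable def planeEquations (θ : ℝ) : ℂ × ℂ →ₗ[ℝ] ℝ × ℝ :=
  (imLm ∘ₗ LinearMap.snd ℝ ℂ ℂ).prod
    (Real.cos θ • reLm ∘ₗ LinearMap.snd ℝ ℂ ℂ + Real.sin θ • imLm ∘ₗ LinearMap.fst ℝ ℂ ℂ)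

@[simp]
theorem planeEquations_apply (θ : ℝ) (v : ℂ × ℂ) :
    planeEquations θ v = (v.2.im, Real.cos θ * v.2.re + Real.sin θ * v.1.im) :=
  rfl

theorem planeEquations_surjective (θ : ℝ) : Function.Surjective (planeEquations θ) := by
  rintro ⟨e, f⟩
  refine ⟨(I * (Real.sin θ * f : ℝ), (Real.cos θ * f : ℝ) + I * e), ?_⟩
  simp only [planeEquations_apply, add_re, add_im, mul_re, mul_im, I_re, I_im, ofReal_re,
    ofReal_im, Prod.mk.injEq]
  constructor
  · ring
  · linear_combination f * Real.sin_sq_add_cos_sq θ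

theorem lineSlope_sup_ker_planeEquations_eq_top_iff (θ : ℝ) (l : ℂ) :
    lineSlope l ⊔ LinearMap.ker (planeEquations θ) = ⊤ ↔
      Real.cos θ * normSq l ≠ Real.sin θ * l.im := by
  rw [← codisjoint_iff, ← Submodule.map_eq_range_iff,
    LinearMap.range_eq_top.2 (planeEquations_surjective θ), lineSlope_eq_range,
    ← LinearMap.range_comp, LinearMap.range_eq_top]
  have hdet : l.im * (Real.sin θ - Real.cos θ * l.im) - l.re * (Real.cos θ * l.re) =
      Real.sin θ * l.im - Real.cos θ * normSq l := by
    rw [normSq_apply]; ring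
  rw [ne_comm, ← sub_ne_zero, ← hdet, ← forall_exists_solution_two_iff_det_ne_zero]
  simp only [Function.Surjective, Prod.forall, Complex.exists, LinearMap.comp_apply,
    LinearMap.prod_apply, Function.prod_apply, LinearMap.id_apply, LinearMap.mulLeft_apply,
    planeEquations_apply, mul_re, mul_im, Prod.mk.injEq]
  refine forall₂_congr fun e f => exists₂_congr fun a b => and_congr ?_ ?_ <;> ring_nf

theorem mem_sphere_I_mul_iff {t : ℝ} (ht : 0 ≤ t) (z : ℂ) :
    z ∈ Metric.sphere (I * t) t ↔ normSq z = 2 * t * z.im := by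
  rw [mem_sphere_iff_norm, ← sq_eq_sq₀ (norm_nonneg _) ht, Complex.sq_norm, normSq_apply,
    normSq_apply]
  simp only [sub_re, sub_im, mul_re, mul_im, I_re, I_im, ofReal_re, ofReal_im]
  constructor <;> intro h <;> linear_combination h

theorem stmt_5_general (θ : ℝ)
    (P : Submodule ℝ (ℂ × ℂ))
    (hP : ∀ v : ℂ × ℂ, v ∈ P ↔
      (v.2.im = 0 ∧ Real.cos θ * v.2.re + Real.sin θ * v.1.im = 0)) :
    (∀ l : ℂ, lineSlope l ⊔ P ≠ ⊤ ↔
      Real.cos θ * Complex.normSq l = Real.sin θ * l.im) ∧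
    (θ ∈ Set.Ioo 0 (Real.pi / 2) →
      {l : ℂ | lineSlope l ⊔ P ≠ ⊤} =
        Metric.sphere (Complex.I * (Real.tan θ / 2)) (Real.tan θ / 2)) := by
  have hP_eq : P = LinearMap.ker (planeEquations θ) := by
    ext v
    simp [hP, Prod.ext_iff]
  have key (l : ℂ) : lineSlope l ⊔ P ≠ ⊤ ↔ Real.cos θ * normSq l = Real.sin θ * l.im := by
    rw [ne_eq, hP_eq, lineSlope_sup_ker_planeEquations_eq_top_iff, not_not]
  refine ⟨key, fun hθ => ?_⟩
  have hcos : 0 < Real.cos θ := Real.cos_pos_of_mem_Ioo ⟨by linarith [hθ.1, Real.pi_pos], hθ.2⟩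
  have htan : 0 ≤ Real.tan θ / 2 := by
    have := Real.tan_pos_of_pos_of_lt_pi_div_two hθ.1 hθ.2
    positivity
  ext l
  have hcenter : I * (Real.tan θ / 2 : ℂ) = I * ((Real.tan θ / 2 : ℝ) : ℂ) := by push_cast; rfl
  rw [Set.mem_ofPred_eq, key, hcenter, mem_sphere_I_mul_iff htan, Real.tan_eq_sin_div_cos]
  field_simp

/-- for the 2-plane `P = {y₂ = 0, cos θ · y₁ + sin θ · x₂ = 0}`, the
line `D_λ = {y = λx}` is non-transverse to `P` iff `cos θ · |λ|² = sin θ · λ₂`; for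
`θ ∈ (0, π/2)` the set of such `λ` is the circle of center `i·tan(θ)/2` and radius
`tan(θ)/2`. -/
theorem stmt_5 (θ : ℝ) (hθ : θ ∈ Set.Icc 0 Real.pi)
    (P : Submodule ℝ (ℂ × ℂ))
    (hP : ∀ v : ℂ × ℂ, v ∈ P ↔
      (v.2.im = 0 ∧ Real.cos θ * v.2.re + Real.sin θ * v.1.im = 0)) :
    (∀ l : ℂ, lineSlope l ⊔ P ≠ ⊤ ↔
      Real.cos θ * Complex.normSq l = Real.sin θ * l.im) ∧
    (θ ∈ Set.Ioo 0 (Real.pi / 2) →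
      {l : ℂ | lineSlope l ⊔ P ≠ ⊤} =
        Metric.sphere (Complex.I * (Real.tan θ / 2)) (Real.tan θ / 2)) :=
  stmt_5_general θ P hP
end

section
/- For any real 2-dimensional linear subspace P ⊂ ℂ² that is not a complex line, the set of slopes λ ∈ ℙ¹(ℂ) = ℂ ∪ {∞} such that the complex line of slope λ through the origin is not transverse to P is a circle on the Riemann sphere (i.e., the image of ℝ ∪ {∞} under a Möbius transformation, equivalently a Euclidean circle or a line in ℂ together with ∞). -/
/-- The vertical complex line `{x = 0}` (slope `∞`), as a real subspace of ℂ². -/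
noncomputable def vertLine : Submodule ℝ (ℂ × ℂ) where
  carrier := {v | v.1 = 0}
  add_mem' := by intro a b ha hb; simp_all [Prod.fst_add]
  zero_mem' := by simp
  smul_mem' := by intro r v hv; simp_all [Prod.smul_fst]

/-- The standard complex structure (multiplication by `i`) as a real-linear map. -/
noncomputable def JL : (ℂ × ℂ) →ₗ[ℝ] ℂ × ℂ where
  toFun v := Complex.I • v
  map_add' := by intro a b; simp [smul_add]
  map_smul' := by intro r v; exact smul_comm Complex.I r v

/-!
Write `P = span ℝ {a, b}`. Every complex line through `0` is the kernel of
`wedge u : v ↦ u₁v₂ - u₂v₁` for some `u ≠ 0`; by a dimension count it fails to be transverse to `P`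
iff the real-linear map `wedge u` sends `a, b` to `ℝ`-dependent complex numbers, i.e. iff
`Im (conj (wedge u a) * wedge u b) = 0`. For `u = (1, λ)` this is a real equation
`α |λ|² - Re (conj γ * λ) + c = 0`, where `α = 0` exactly when the vertical line `u = (0, 1)` is
critical. Its discriminant `|γ|² - 4αc` equals `|a₁b₂ - a₂b₁|²`, which is positive: otherwise `P`
would lie in, hence equal, the complex line `ker (wedge a)`. So the equation describes a genuine
circle when `α ≠ 0` and a line when `α = 0`.
-/

open Complex ComplexConjugate Module Submodule

section LinearAlgebra

variable {K V W : Type*} [Field K] [AddCommGroup V] [Module K V] [AddCommGroup W] [Module K W]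

theorem Submodule.sup_eq_top_iff_disjoint [FiniteDimensional K V] {s t : Submodule K V}
    (hdim : finrank K s + finrank K t = finrank K V) : s ⊔ t = ⊤ ↔ Disjoint s t := by
  refine ⟨fun h ↦ ?_, eq_top_of_disjoint s t hdim.ge⟩
  have key := finrank_sup_add_finrank_inf_eq s t
  rw [h, finrank_top, ← hdim, add_eq_left, finrank_eq_zero] at key
  exact disjoint_iff.2 key

theorem exists_linearIndependent_pair_span_eq {P : Submodule K V} (hP : finrank K P = 2) :
    ∃ a b : V, LinearIndependent K ![a, b] ∧ span K {a, b} = P := by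
  have : FiniteDimensional K P := .of_finrank_pos (by omega)
  let B := Module.finBasisOfFinrankEq K P hP
  have hB : ![(B 0 : V), B 1] = P.subtype ∘ B := by
    ext i; fin_cases i <;> rfl
  refine ⟨B 0, B 1, ?_, ?_⟩
  · rw [hB]
    exact B.linearIndependent.map' P.subtype P.ker_subtype
  · rw [← Matrix.range_cons_cons_empty, hB, Set.range_comp, span_image, B.span_eq,
      Submodule.map_subtype_top]

theorem disjoint_span_pair_ker_iff {a b : V} (hab : LinearIndependent K ![a, b])
    (f : V →ₗ[K] W) :
    Disjoint (span K {a, b}) (LinearMap.ker f) ↔ LinearIndependent K ![f a, f b] := by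
  rw [LinearMap.disjoint_ker, LinearIndependent.pair_iff]
  rw [LinearIndependent.pair_iff] at hab
  constructor
  · intro h s t hst
    refine hab s t (h _ (mem_span_pair.2 ⟨s, t, rfl⟩) ?_)
    simpa using hst
  · rintro h _ hx hfx
    obtain ⟨s, t, rfl⟩ := mem_span_pair.1 hx
    obtain ⟨rfl, rfl⟩ := h s t (by simpa using hfx)
    simp

theorem finrank_span_pair {a b : V} (hab : LinearIndependent K ![a, b]) :
    finrank K (span K {a, b}) = 2 := by
  rw [← Matrix.range_cons_cons_empty, finrank_span_eq_card hab, Fintype.card_fin]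

end LinearAlgebra

theorem Complex.linearIndependent_pair_iff {z w : ℂ} :
    LinearIndependent ℝ ![z, w] ↔ (conj z * w).im ≠ 0 := by
  simp only [LinearIndependent.pair_iff, Complex.ext_iff, add_re, add_im, real_smul, mul_re,
    mul_im, ofReal_re, ofReal_im, conj_re, conj_im, zero_re, zero_im]
  constructor
  · intro h hzw
    by_cases hz : z = 0
    · simpa [hz] using h 1 0
    · have hz' : z.re ^ 2 + z.im ^ 2 ≠ 0 := by
        simpa [normSq_apply, ← sq] using (normSq_pos.2 hz).ne'
      refine hz' (neg_eq_zero.1 (h (z.re * w.re + z.im * w.im) (-(z.re ^ 2 + z.im ^ 2)) ?_).2)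
      constructor
      · linear_combination z.im * hzw
      · linear_combination -z.re * hzw
  · rintro h s t ⟨hre, him⟩
    constructor
    · refine (mul_eq_zero.1 ?_).resolve_right h
      linear_combination w.im * hre - w.re * him
    · refine (mul_eq_zero.1 ?_).resolve_right h
      linear_combination z.re * him - z.im * hre

theorem setOf_quadric_eq_sphere {α c : ℝ} {γ : ℂ} (hα : α ≠ 0) (hD : 0 ≤ normSq γ - 4 * α * c) :
    {l : ℂ | α * normSq l - (conj γ * l).re + c = 0} =
      Metric.sphere (γ / (2 * α)) (√(normSq γ - 4 * α * c) / (2 * |α|)) := by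
  ext l
  have hα' : (α : ℂ) ≠ 0 := by exact_mod_cast hα
  have hnorm : ‖2 * α * l - γ‖ = dist l (γ / (2 * α)) * (2 * |α|) := by
    rw [dist_eq,
      show (2 * α * l - γ : ℂ) = (2 * α : ℝ) * (l - γ / (2 * α)) by push_cast; field_simp,
      norm_mul, norm_real, Real.norm_eq_abs, abs_mul, abs_two, mul_comm]
  have hsq : normSq (2 * α * l - γ) = 4 * α * (α * normSq l - (conj γ * l).re + c) +
      (normSq γ - 4 * α * c) := by
    simp only [normSq_apply, sub_re, sub_im, mul_re, mul_im, conj_re, conj_im, ofReal_re,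
      ofReal_im, re_ofNat, im_ofNat]
    ring
  have h4α : 4 * α ≠ 0 := mul_ne_zero four_ne_zero hα
  rw [Set.mem_ofPred_eq, Metric.mem_sphere, eq_div_iff (by positivity), ← hnorm, norm_def,
    Real.sqrt_inj (normSq_nonneg _) hD, hsq, add_eq_right, mul_eq_zero, or_iff_right h4α]

theorem setOf_re_conj_mul_eq_line {γ : ℂ} (hγ : γ ≠ 0) (c : ℝ) :
    {l : ℂ | (conj γ * l).re = c} = {u | ∃ t : ℝ, u = ↑(c / normSq γ) * γ + t * (I * γ)} := by
  have hN : γ.re ^ 2 + γ.im ^ 2 ≠ 0 := by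
    simpa [normSq_apply, sq] using (normSq_pos.2 hγ).ne'
  ext l
  simp only [Set.mem_ofPred_eq]
  constructor
  · rintro rfl
    refine ⟨(conj γ * l).im / normSq γ, ?_⟩
    apply Complex.ext <;>
    · simp only [mul_re, mul_im, add_re, add_im, ofReal_re, ofReal_im, conj_re, conj_im, I_re,
        I_im, normSq_apply, ← sq]
      field_simp
      ring
  · rintro ⟨t, rfl⟩
    simp only [mul_re, mul_im, add_re, add_im, ofReal_re, ofReal_im, conj_re, conj_im, I_re,
      I_im, normSq_apply, ← sq]
    field_simp
    ring

theorem finrank_real_complex_prod : finrank ℝ (ℂ × ℂ) = 4 := by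
  rw [finrank_prod, finrank_real_complex]

section ComplexLine

variable {φ : ℂ × ℂ →ₗ[ℂ] ℂ}

theorem finrank_ker_restrictScalars (hφ : φ ≠ 0) :
    finrank ℝ (LinearMap.ker (φ.restrictScalars ℝ)) = 2 := by
  have hsurj : Function.Surjective φ := LinearMap.surjective_of_ne_zero hφ
  have h := LinearMap.finrank_range_add_finrank_ker (φ.restrictScalars ℝ)
  rw [LinearMap.range_eq_top.2 (show Function.Surjective (φ.restrictScalars ℝ) from hsurj),
    finrank_top, finrank_real_complex, finrank_real_complex_prod] at h
  omega

theorem map_JL_restrictScalars (L : Submodule ℂ (ℂ × ℂ)) :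
    map JL (L.restrictScalars ℝ) = L.restrictScalars ℝ := by
  refine le_antisymm ?_ fun v hv ↦ ⟨-I • v, L.smul_mem _ hv, ?_⟩
  · rintro _ ⟨v, hv, rfl⟩
    exact L.smul_mem I hv
  · change I • -I • v = v
    simp [smul_smul]

theorem ker_sup_span_pair_ne_top_iff (hφ : φ ≠ 0) {a b : ℂ × ℂ}
    (hab : LinearIndependent ℝ ![a, b]) :
    LinearMap.ker (φ.restrictScalars ℝ) ⊔ span ℝ {a, b} ≠ ⊤ ↔ (conj (φ a) * φ b).im = 0 := by
  rw [Ne, sup_eq_top_iff_disjoint, disjoint_comm, disjoint_span_pair_ker_iff hab,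
    Complex.linearIndependent_pair_iff, not_not]
  · rfl
  · rw [finrank_ker_restrictScalars hφ, finrank_span_pair hab, finrank_real_complex_prod]

end ComplexLine

noncomputable def wedge (u : ℂ × ℂ) : ℂ × ℂ →ₗ[ℂ] ℂ :=
  u.1 • LinearMap.snd ℂ ℂ ℂ - u.2 • LinearMap.fst ℂ ℂ ℂ

@[simp]
theorem wedge_apply (u v : ℂ × ℂ) : wedge u v = u.1 * v.2 - u.2 * v.1 := rfl

theorem wedge_ne_zero {u : ℂ × ℂ} (hu : u ≠ 0) : wedge u ≠ 0 := by
  intro h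
  refine hu (Prod.ext ?_ ?_)
  · simpa using LinearMap.congr_fun h (0, 1)
  · simpa using LinearMap.congr_fun h (1, 0)

theorem lineSlope_eq_ker_wedge (l : ℂ) :
    lineSlope l = LinearMap.ker ((wedge (1, l)).restrictScalars ℝ) := by
  ext v
  change v.2 = l * v.1 ↔ _
  simp [sub_eq_zero]

theorem vertLine_eq_ker_wedge : vertLine = LinearMap.ker ((wedge (0, 1)).restrictScalars ℝ) := by
  ext v
  change v.1 = 0 ↔ _
  simp

theorem map_JL_span_pair_of_wedge_eq_zero {a b : ℂ × ℂ} (hab : LinearIndependent ℝ ![a, b])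
    (h : wedge a b = 0) : map JL (span ℝ {a, b}) = span ℝ {a, b} := by
  have hφ : wedge a ≠ 0 := wedge_ne_zero (hab.ne_zero 0)
  have hle : span ℝ {a, b} ≤ LinearMap.ker ((wedge a).restrictScalars ℝ) := by
    rw [span_le, Set.insert_subset_iff, Set.singleton_subset_iff]
    exact ⟨by simp [mul_comm], h⟩
  rw [eq_of_le_of_finrank_eq hle (by rw [finrank_span_pair hab, finrank_ker_restrictScalars hφ]),
    LinearMap.ker_restrictScalars, map_JL_restrictScalars]

theorem im_conj_wedge_mul_wedge (a b : ℂ × ℂ) (l : ℂ) :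
    (conj (wedge (1, l) a) * wedge (1, l) b).im =
      (conj a.1 * b.1).im * normSq l - (conj (I * (a.2 * conj b.1 - conj a.1 * b.2)) * l).re +
        (conj a.2 * b.2).im := by
  simp only [wedge_apply, mul_re, mul_im, sub_re, sub_im, conj_re, conj_im, one_re, one_im,
    I_re, I_im, normSq_apply]
  ring

theorem normSq_sub_four_mul_eq_normSq_wedge (a b : ℂ × ℂ) :
    normSq (I * (a.2 * conj b.1 - conj a.1 * b.2)) -
      4 * (conj a.1 * b.1).im * (conj a.2 * b.2).im = normSq (wedge a b) := by
  simp only [wedge_apply, mul_re, mul_im, sub_re, sub_im, conj_re, conj_im, I_re, I_im,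
    normSq_apply]
  ring

/-- for a real 2-plane `P ⊂ ℂ²` which is not a complex line, the set of
slopes `λ ∈ ℙ¹(ℂ) = ℂ ∪ {∞}` of complex lines through `0` non-transverse to `P` is a
circle on the Riemann sphere: either a Euclidean circle in ℂ (with the vertical line
`∞` transverse), or a real affine line in ℂ together with `∞` (vertical line
non-transverse). -/
theorem stmt_6 (P : Submodule ℝ (ℂ × ℂ)) (hdim : Module.finrank ℝ P = 2)
    (hnc : Submodule.map JL P ≠ P) :
    (∃ (c : ℂ) (r : ℝ), 0 < r ∧ {l : ℂ | lineSlope l ⊔ P ≠ ⊤} = Metric.sphere c r ∧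
      vertLine ⊔ P = ⊤) ∨
    (∃ z w : ℂ, w ≠ 0 ∧ {l : ℂ | lineSlope l ⊔ P ≠ ⊤} = {u : ℂ | ∃ t : ℝ, u = z + t * w} ∧
      vertLine ⊔ P ≠ ⊤) := by
  obtain ⟨a, b, hab, rfl⟩ := exists_linearIndependent_pair_span_eq hdim
  have hwedge : wedge a b ≠ 0 := fun h ↦ hnc (map_JL_span_pair_of_wedge_eq_zero hab h)
  set α := (conj a.1 * b.1).im
  set γ := I * (a.2 * conj b.1 - conj a.1 * b.2)
  set c := (conj a.2 * b.2).im
  have hcrit : {l : ℂ | lineSlope l ⊔ span ℝ {a, b} ≠ ⊤} =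
      {l : ℂ | α * normSq l - (conj γ * l).re + c = 0} := by
    ext l
    rw [Set.mem_ofPred_eq, Set.mem_ofPred_eq, lineSlope_eq_ker_wedge,
      ker_sup_span_pair_ne_top_iff (wedge_ne_zero (by simp)) hab, im_conj_wedge_mul_wedge]
  have hvert : vertLine ⊔ span ℝ {a, b} ≠ ⊤ ↔ α = 0 := by
    rw [vertLine_eq_ker_wedge, ker_sup_span_pair_ne_top_iff (wedge_ne_zero (by simp)) hab]
    simp [α]
  have hD : 0 < normSq γ - 4 * α * c := by
    rw [normSq_sub_four_mul_eq_normSq_wedge]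
    exact normSq_pos.2 hwedge
  rcases eq_or_ne α 0 with hα | hα
  · have hγ : γ ≠ 0 := by
      rintro hγ
      simp [hγ, hα] at hD
    refine .inr ⟨↑(c / normSq γ) * γ, I * γ, mul_ne_zero I_ne_zero hγ, ?_, hvert.2 hα⟩
    rw [hcrit, ← setOf_re_conj_mul_eq_line hγ c]
    ext l
    simp only [Set.mem_ofPred_eq, hα, zero_mul, zero_sub, neg_add_eq_zero]
  · refine .inl ⟨_, _, by positivity, hcrit.trans (setOf_quadric_eq_sphere hα hD.le), ?_⟩
    by_contra h
    exact hα (hvert.1 h)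
end

section
/- Let H ⊂ ℂ² be a C² real hypersurface such that at each point z ∈ H, the unique complex line T_z^{1,0}H contained in T_zH has finite slope λ(z) ∈ ℂ (not vertical), and assume z ↦ λ(z) is C¹. Then the graph p*H = {(z, λ(z)) : z ∈ H} ⊂ ℂ³ is a 3-dimensional C¹ submanifold that is semi-legendrian: at every point w ∈ p*H, the intersection of the tangent space T_w(p*H) with the contact plane 𝒫_w = ker(dy − λ dx) has real dimension at least 2. -/
/-- The contact plane `𝒫 = ker(dy − λ dx)` at a point of ℂ³ with λ-coordinate `l`:
the set of vectors `(u, v, μ)` with `v = l·u`. -/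
noncomputable def contactPlane (l : ℂ) : Submodule ℝ (ℂ × ℂ × ℂ) where
  carrier := {w | w.2.1 = l * w.1}
  add_mem' := by
    intro a b ha hb
    simp only [Set.mem_setOf_eq, Prod.fst_add, Prod.snd_add] at *
    rw [ha, hb]; ring
  zero_mem' := by simp
  smul_mem' := by
    intro r w hw
    simp only [Set.mem_setOf_eq, Prod.smul_fst, Prod.smul_snd, Complex.real_smul] at *
    rw [hw]; ring

/-- The tangent space at `(z, lam z)` of the graph `{(z, lam z) : z ∈ H}`:
the image of `T_zH = ker dρ_z` under `v ↦ (v, dlam_z v)`. -/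
noncomputable def graphTangent (ρ : ℂ × ℂ → ℝ) (lam : ℂ × ℂ → ℂ) (z : ℂ × ℂ) :
    Submodule ℝ (ℂ × ℂ × ℂ) :=
  Submodule.map
    ((LinearMap.fst ℝ ℂ ℂ).prod
      ((LinearMap.snd ℝ ℂ ℂ).prod (fderiv ℝ lam z : (ℂ × ℂ) →ₗ[ℝ] ℂ)))
    (LinearMap.ker (fderiv ℝ ρ z : (ℂ × ℂ) →ₗ[ℝ] ℝ))

/-! The complex tangent line `{(u, λ(z) u)}` of `H` lifts, through the differential
`v ↦ (v, dλ_z v)` of `z ↦ (z, λ(z))`, to a real 2-plane inside `T(p*H)`; its points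
`(u, λ(z) u, ·)` satisfy `dy = λ dx`, so the lifted plane also lies in the contact plane. -/

noncomputable def graphDifferential (D : ℂ × ℂ →ₗ[ℝ] ℂ) : ℂ × ℂ →ₗ[ℝ] ℂ × ℂ × ℂ :=
  (LinearMap.fst ℝ ℂ ℂ).prod ((LinearMap.snd ℝ ℂ ℂ).prod D)

noncomputable def complexLine (l : ℂ) : ℂ →ₗ[ℝ] ℂ × ℂ where
  toFun u := (u, l * u)
  map_add' u v := by simp [mul_add]
  map_smul' r u := by simp [mul_left_comm]

theorem graphDifferential_injective (D : ℂ × ℂ →ₗ[ℝ] ℂ) :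
    Function.Injective (graphDifferential D) :=
  fun _ _ h => Prod.ext (congrArg (·.1) h) (congrArg (·.2.1) h)

theorem complexLine_injective (l : ℂ) : Function.Injective (complexLine l) :=
  fun _ _ h => congrArg Prod.fst h

theorem range_complexLine_le_ker {l : ℂ} {φ : ℂ × ℂ →ₗ[ℝ] ℝ}
    (h : ∀ u : ℂ, φ (u, l * u) = 0) : LinearMap.range (complexLine l) ≤ LinearMap.ker φ := by
  rintro _ ⟨u, rfl⟩
  exact h u

theorem graphDifferential_complexLine_mem_contactPlane (D : ℂ × ℂ →ₗ[ℝ] ℂ) (l u : ℂ) :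
    graphDifferential D (complexLine l u) ∈ contactPlane l :=
  rfl

theorem two_le_finrank_of_injective_complex {V : Type*} [AddCommGroup V] [Module ℝ V]
    {S : Submodule ℝ V} [Module.Finite ℝ S] {f : ℂ →ₗ[ℝ] V}
    (hf : Function.Injective f) (hS : ∀ u, f u ∈ S) : 2 ≤ Module.finrank ℝ S := by
  rw [← Complex.finrank_real_complex]
  exact LinearMap.finrank_le_finrank_of_injective (f := f.codRestrict S hS)
    fun _ _ h => hf (congrArg Subtype.val h)

theorem stmt_10_general (ρ : ℂ × ℂ → ℝ) (lam : ℂ × ℂ → ℂ)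
    (hslope : ∀ z, ρ z = 0 → ∀ u : ℂ, fderiv ℝ ρ z (u, lam z * u) = 0) :
    ∀ z, ρ z = 0 →
      2 ≤ Module.finrank ℝ ↥(graphTangent ρ lam z ⊓ contactPlane (lam z)) := by
  intro z hz
  set D : ℂ × ℂ →ₗ[ℝ] ℂ := (fderiv ℝ lam z : ℂ × ℂ →ₗ[ℝ] ℂ)
  refine two_le_finrank_of_injective_complex
    (f := (graphDifferential D).comp (complexLine (lam z)))
    ((graphDifferential_injective D).comp (complexLine_injective _)) fun u => ⟨?_, ?_⟩
  -- `graphTangent ρ lam z` is, by definition, the image of `ker dρ_z` under `graphDifferential D`.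
  · exact Submodule.mem_map_of_mem (range_complexLine_le_ker (hslope z hz) ⟨u, rfl⟩)
  · exact graphDifferential_complexLine_mem_contactPlane D (lam z) u

/-- let `H = {ρ = 0}` be a C² real hypersurface of ℂ² whose complex
tangent `T^{1,0}H = {(u, lam(z)·u)}` has finite slope `lam(z)` depending C¹ on `z`.
Then the graph `p*H = {(z, lam z) : z ∈ H}` is semi-legendrian: at each of its points
the tangent space meets the contact plane `ker(dy − λ dx)` in dimension ≥ 2. -/
theorem stmt_10 (ρ : ℂ × ℂ → ℝ) (lam : ℂ × ℂ → ℂ)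
    (hρ : ContDiff ℝ 2 ρ) (hlam : ContDiff ℝ 1 lam)
    (hreg : ∀ z, ρ z = 0 → fderiv ℝ ρ z ≠ 0)
    (hslope : ∀ z, ρ z = 0 → ∀ u : ℂ, fderiv ℝ ρ z (u, lam z * u) = 0) :
    ∀ z, ρ z = 0 →
      2 ≤ Module.finrank ℝ ↥(graphTangent ρ lam z ⊓ contactPlane (lam z)) :=
  stmt_10_general ρ lam hslope
end

section
/- Let M ⊂ ℂ³ be a 2-dimensional C¹ semi-legendrian submanifold, i.e., at every point w ∈ M the tangent plane T_wM is contained in the contact plane 𝒫_w = ker(dy − λ dx). If moreover T_wM is transverse to the fiber direction ∂/∂λ at every point, then each tangent plane T_wM is a complex line; that is, T_wM is stable under multiplication by i. -/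
/-- The fiber direction `∂/∂λ` of the projection `p(x, y, λ) = (x, y)`. -/
noncomputable def fiberDir : Submodule ℝ (ℂ × ℂ × ℂ) where
  carrier := {w | w.1 = 0 ∧ w.2.1 = 0}
  add_mem' := by intro a b ha hb; simp_all [Prod.fst_add, Prod.snd_add]
  zero_mem' := by simp
  smul_mem' := by intro r w hw; simp_all [Prod.smul_fst, Prod.smul_snd]

/-!
Transversality to `∂/∂λ` together with the contact condition makes the `x`-projection injective on
the tangent plane, so by the inverse function theorem for `w ↦ (F w, x(w))` the surface is locally
a graph `x ↦ (x, g x, l x)`. The contact condition reads `dg = l dx`: `g` is holomorphic with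
`g' = l`, hence `l` is holomorphic as well. The graph map is therefore holomorphic, and its real
derivative, whose image is the tangent plane, commutes with `i`.
-/

open Filter Topology

theorem eq_zero_of_fst_eq_zero_of_le_contactPlane {K : Submodule ℝ (ℂ × ℂ × ℂ)} {l : ℂ}
    (hleg : K ≤ contactPlane l) (htrans : K ⊓ fiberDir = ⊥) {v : ℂ × ℂ × ℂ} (hv : v ∈ K)
    (hv₁ : v.1 = 0) : v = 0 := by
  have hv₂ : v.2.1 = 0 := by rw [show v.2.1 = l * v.1 from hleg hv, hv₁, mul_zero]
  have hv' : v ∈ K ⊓ fiberDir := ⟨hv, hv₁, hv₂⟩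
  rwa [htrans, Submodule.mem_bot] at hv'

theorem injective_prod_fst_of_le_contactPlane {G : Type*} [NormedAddCommGroup G]
    [NormedSpace ℝ G] {L : ℂ × ℂ × ℂ →L[ℝ] G} {l : ℂ}
    (hleg : LinearMap.ker (L : ℂ × ℂ × ℂ →ₗ[ℝ] G) ≤ contactPlane l)
    (htrans : LinearMap.ker (L : ℂ × ℂ × ℂ →ₗ[ℝ] G) ⊓ fiberDir = ⊥) :
    Function.Injective (L.prod (ContinuousLinearMap.fst ℝ ℂ (ℂ × ℂ))) := by
  refine (injective_iff_map_eq_zero _).2 fun v hv => ?_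
  rw [ContinuousLinearMap.prod_apply, Prod.mk_eq_zero] at hv
  exact eq_zero_of_fst_eq_zero_of_le_contactPlane hleg htrans hv.1 hv.2

section LevelSetSection

variable {E G H : Type*} [NormedAddCommGroup E] [NormedSpace ℝ E] [NormedAddCommGroup G]
  [NormedSpace ℝ G] [NormedAddCommGroup H] [NormedSpace ℝ H]

theorem fderiv_apply_fderiv_of_comp_eventuallyEq {f : E → G} {s : H → E} {g : H → G}
    {g' : H →L[ℝ] G} {x : H}
    (hf : DifferentiableAt ℝ f (s x)) (hs : DifferentiableAt ℝ s x) (hg : HasFDerivAt g g' x)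
    (hfs : f ∘ s =ᶠ[𝓝 x] g) (u : H) : fderiv ℝ f (s x) (fderiv ℝ s x u) = g' u := by
  have h := (hf.hasFDerivAt.comp x hs.hasFDerivAt).unique (hg.congr_of_eventuallyEq hfs)
  exact congrArg (fun L : H →L[ℝ] G => L u) h

theorem fderiv_section_apply {F : E → G} {π : E →L[ℝ] H} {s : H → E} {c : G} {x : H}
    (hF : DifferentiableAt ℝ F (s x)) (hs : DifferentiableAt ℝ s x)
    (hsec : ∀ᶠ y in 𝓝 x, F (s y) = c ∧ π (s y) = y) (u : H) :
    fderiv ℝ F (s x) (fderiv ℝ s x u) = 0 ∧ π (fderiv ℝ s x u) = u := by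
  constructor
  · exact fderiv_apply_fderiv_of_comp_eventuallyEq hF hs (hasFDerivAt_const c x)
      (hsec.mono fun y hy => hy.1) u
  · simpa using fderiv_apply_fderiv_of_comp_eventuallyEq π.differentiableAt hs (hasFDerivAt_id x)
      (hsec.mono fun y hy => hy.2) u

theorem exists_local_section_of_injective [FiniteDimensional ℝ E] [FiniteDimensional ℝ G]
    [FiniteDimensional ℝ H] {F : E → G} {π : E →L[ℝ] H} {w₀ : E}
    (hF : ContDiffAt ℝ 1 F w₀) (hinj : Function.Injective ((fderiv ℝ F w₀).prod π))
    (hdim : Module.finrank ℝ E = Module.finrank ℝ G + Module.finrank ℝ H) :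
    ∃ s : H → E, s (π w₀) = w₀ ∧ ContDiffAt ℝ 1 s (π w₀) ∧
      ∀ᶠ x in 𝓝 (π w₀), F (s x) = F w₀ ∧ π (s x) = x := by
  let A : E ≃L[ℝ] G × H := (LinearMap.linearEquivOfInjective _ hinj
    (by rw [hdim, Module.finrank_prod])).toContinuousLinearEquiv
  have hΦ : ContDiffAt ℝ 1 (fun w => (F w, π w)) w₀ := hF.prodMk π.contDiff.contDiffAt
  have hΦ' : HasFDerivAt (fun w => (F w, π w)) (A : E →L[ℝ] G × H) w₀ :=
    (hF.differentiableAt one_ne_zero).hasFDerivAt.prodMk π.hasFDerivAt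
  have hfiber : ContDiff ℝ 1 fun x : H => (F w₀, x) := contDiff_const.prodMk contDiff_id
  refine ⟨fun x => hΦ.localInverse hΦ' one_ne_zero (F w₀, x),
    hΦ.localInverse_apply_image hΦ' one_ne_zero,
    (hΦ.to_localInverse hΦ' one_ne_zero).comp _ hfiber.contDiffAt, ?_⟩
  have hright := (hΦ.hasStrictFDerivAt' hΦ' one_ne_zero).eventually_right_inverse
  filter_upwards [hfiber.continuous.continuousAt.eventually hright] with x hx
  exact Prod.ext_iff.1 hx

end LevelSetSection

theorem HasFDerivAt.hasDerivAt_of_apply_eq_mul {g : ℂ → ℂ} {L : ℂ →L[ℝ] ℂ} {c x : ℂ}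
    (hg : HasFDerivAt g L x) (hL : ∀ u, L u = c * u) : HasDerivAt g c x := by
  refine hasDerivAt_iff_hasFDerivAt.2 (hasFDerivAt_of_restrictScalars ℝ hg ?_)
  ext u
  simp [hL, mul_comm]

theorem differentiableAt_of_eventually_hasDerivAt {g l : ℂ → ℂ} {z : ℂ}
    (h : ∀ᶠ x in 𝓝 z, HasDerivAt g (l x) x) : DifferentiableAt ℂ l z := by
  obtain ⟨U, hU, hUo, hzU⟩ := eventually_nhds_iff.1 h
  have hgU : DifferentiableOn ℂ g U := fun x hx =>
    (hU x hx).differentiableAt.differentiableWithinAt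
  have hl : deriv g =ᶠ[𝓝 z] l := eventually_nhds_iff.2 ⟨U, fun x hx => (hU x hx).deriv, hUo, hzU⟩
  exact hl.differentiableAt_iff.1 ((hgU.analyticOnNhd hUo).deriv z hzU).differentiableAt

theorem differentiableAt_complex_of_section {G : Type*} [NormedAddCommGroup G] [NormedSpace ℝ G]
    {F : ℂ × ℂ × ℂ → G} {s : ℂ → ℂ × ℂ × ℂ} {x₀ : ℂ} (hF : Differentiable ℝ F)
    (hleg : ∀ w, F w = 0 →
      LinearMap.ker (fderiv ℝ F w : ℂ × ℂ × ℂ →ₗ[ℝ] G) ≤ contactPlane w.2.2)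
    (hs : ∀ᶠ x in 𝓝 x₀, DifferentiableAt ℝ s x)
    (hsec : ∀ᶠ x in 𝓝 x₀, F (s x) = 0 ∧ (s x).1 = x) : DifferentiableAt ℂ s x₀ := by
  have hy : ∀ᶠ x in 𝓝 x₀, HasDerivAt (fun x => (s x).2.1) (s x).2.2 x := by
    filter_upwards [hs, hsec, eventually_eventually_nhds.2 hsec] with x hsx hsecx hsec'
    have hD := fderiv_section_apply (π := ContinuousLinearMap.fst ℝ ℂ (ℂ × ℂ)) (hF _) hsx hsec'
    refine hsx.hasFDerivAt.snd.fst.hasDerivAt_of_apply_eq_mul fun u => ?_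
    have hmem : (fderiv ℝ s x u).2.1 = (s x).2.2 * (fderiv ℝ s x u).1 :=
      hleg _ hsecx.1 (hD u).1
    rwa [show (fderiv ℝ s x u).1 = u from (hD u).2] at hmem
  have hx : (fun x => (s x).1) =ᶠ[𝓝 x₀] id := hsec.mono fun x hx => hx.2
  exact (differentiableAt_id.congr_of_eventuallyEq hx).prodMk
    (hy.self_of_nhds.differentiableAt.prodMk (differentiableAt_of_eventually_hasDerivAt hy))

theorem stmt_12_general (F : ℂ × ℂ × ℂ → Fin 4 → ℝ) (hF : ContDiff ℝ 1 F)
    (hleg : ∀ w, F w = 0 → LinearMap.ker (fderiv ℝ F w : ℂ × ℂ × ℂ →ₗ[ℝ] Fin 4 → ℝ) ≤ contactPlane w.2.2)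
    (htrans : ∀ w, F w = 0 → LinearMap.ker (fderiv ℝ F w : ℂ × ℂ × ℂ →ₗ[ℝ] Fin 4 → ℝ) ⊓ fiberDir = ⊥) :
    ∀ w, F w = 0 → ∀ v ∈ LinearMap.ker (fderiv ℝ F w : ℂ × ℂ × ℂ →ₗ[ℝ] Fin 4 → ℝ),
      Complex.I • v ∈ LinearMap.ker (fderiv ℝ F w : ℂ × ℂ × ℂ →ₗ[ℝ] Fin 4 → ℝ) := by
  intro w₀ hw₀ v hv
  obtain ⟨s, hs₀, hs, hsec⟩ := exists_local_section_of_injective hF.contDiffAt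
    (injective_prod_fst_of_le_contactPlane (hleg w₀ hw₀) (htrans w₀ hw₀))
    (by simp [Complex.finrank_real_complex])
  simp only [ContinuousLinearMap.coe_fst', hw₀] at hs₀ hs hsec
  have hsℂ : DifferentiableAt ℂ s w₀.1 :=
    differentiableAt_complex_of_section (hF.differentiable one_ne_zero) hleg
      ((hs.eventually (by simp)).mono fun x hx => hx.differentiableAt one_ne_zero) hsec
  set D := fderiv ℝ s w₀.1
  have hD : ∀ u,
      D u ∈ LinearMap.ker (fderiv ℝ F w₀ : ℂ × ℂ × ℂ →ₗ[ℝ] Fin 4 → ℝ) ∧ (D u).1 = u := by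
    intro u
    simpa [hs₀] using fderiv_section_apply (π := ContinuousLinearMap.fst ℝ ℂ (ℂ × ℂ))
      (hF.differentiable one_ne_zero _) (hsℂ.restrictScalars ℝ) hsec u
  -- `v - D v.1` is tangent with vanishing `x`-component, so transversality kills it
  have hv_eq : v = D v.1 := sub_eq_zero.1 <|
    eq_zero_of_fst_eq_zero_of_le_contactPlane (hleg w₀ hw₀) (htrans w₀ hw₀)
      (sub_mem hv (hD v.1).1) (by simp [(hD v.1).2])
  have hDI : D (Complex.I • v.1) = Complex.I • D v.1 := by
    rw [show D = _ from hsℂ.fderiv_restrictScalars ℝ]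
    exact map_smul (fderiv ℂ s w₀.1) Complex.I v.1
  rw [hv_eq, ← hDI]
  exact (hD _).1

/-- let `M = {F = 0} ⊂ ℂ³` be a 2-dimensional C¹ semi-legendrian
submanifold (every tangent plane is contained in the contact plane), transverse to
the fiber direction `∂/∂λ` at every point. Then each tangent plane is a complex
line: it is stable under multiplication by `i`. -/
theorem stmt_12 (F : ℂ × ℂ × ℂ → Fin 4 → ℝ) (hF : ContDiff ℝ 1 F)
    (hreg : ∀ w, F w = 0 → Function.Surjective (fderiv ℝ F w))
    (hleg : ∀ w, F w = 0 → LinearMap.ker (fderiv ℝ F w : ℂ × ℂ × ℂ →ₗ[ℝ] Fin 4 → ℝ) ≤ contactPlane w.2.2)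
    (htrans : ∀ w, F w = 0 → LinearMap.ker (fderiv ℝ F w : ℂ × ℂ × ℂ →ₗ[ℝ] Fin 4 → ℝ) ⊓ fiberDir = ⊥) :
    ∀ w, F w = 0 → ∀ v ∈ LinearMap.ker (fderiv ℝ F w : ℂ × ℂ × ℂ →ₗ[ℝ] Fin 4 → ℝ),
      Complex.I • v ∈ LinearMap.ker (fderiv ℝ F w : ℂ × ℂ × ℂ →ₗ[ℝ] Fin 4 → ℝ) :=
  stmt_12_general F hF hleg htrans
end

section
/- Let S ⊂ ℙ²(ℂ) be a germ of real surface and suppose there exist two pencils of complex projective lines 𝒫₁ = {x = t} and 𝒫₂ = {y = t} (in affine coordinates (x,y), i.e., the pencils through [0:1:0] and [1:0:0]) and two transverse C¹ foliations ℱ₁, ℱ₂ of S such that every leaf of ℱᵢ is contained in a line of 𝒫ᵢ. Then there exist real curves C₁ ⊂ ℂ_x and C₂ ⊂ ℂ_y such that S ⊂ C₁ × C₂ ⊂ ℂ², where C₁ × C₂ is viewed as a real surface in ℂ². -/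
/-!
The coordinate `ψ₁` is constant on the leaves of `ℱ₁ = {g₁ = const}`, so `ψ₁ = f₁ ∘ g₁`. Restricting
`g₁` to a line along which its derivative does not vanish gives a local C¹ inverse, hence `f₁` is C¹
on the open interval `g₁(ℝ²)`, and `dψ₁ = f₁' · dg₁`. If `f₁'` vanished somewhere, `dψ` would kill
the nonzero vectors of `ker dg₂`, on which `dψ₂ = f₂' · dg₂` also vanishes, contradicting that `ψ`
is an immersion. Reparametrising the interval by `ℝ`, `C₁` is the image of one regular C¹ curve;
likewise for `C₂`.
-/

open Set Filter Topology

/-- A (germ of) real curve in ℂ: near each of its points it is the image of a regular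
C¹ parametrization. -/
def IsRealCurve (C : Set ℂ) : Prop :=
  ∀ p ∈ C, ∃ (γ : ℝ → ℂ) (U : Set ℂ), U ∈ nhds p ∧ ContDiff ℝ 1 γ ∧
    (∀ t : ℝ, deriv γ t ≠ 0) ∧ C ∩ U = Set.range γ ∩ U

theorem isRealCurve_range {γ : ℝ → ℂ} (hγ : ContDiff ℝ 1 γ) (hγ' : ∀ t, deriv γ t ≠ 0) :
    IsRealCurve (range γ) :=
  fun _ _ => ⟨γ, univ, univ_mem, hγ, hγ', rfl⟩

theorem IsOpen.eq_Ioo_or_Ioi_or_Iio_or_univ {I : Set ℝ} (ho : IsOpen I) (hc : IsPreconnected I) :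
    (∃ a b, I = Ioo a b) ∨ (∃ a, I = Ioi a) ∨ (∃ b, I = Iio b) ∨ I = univ := by
  rw [← ho.interior_eq]
  rcases hc.mem_intervals with h | h | h | h | h | h | h | h | h | (h : I = ∅) <;>
    rw [h] <;> simp [interior_Icc, interior_Ico, interior_Ioc]
  exact Or.inl ⟨0, 0, (Ioo_self 0).symm⟩

theorem exists_contDiff_deriv_ne_zero_range_eq {I : Set ℝ} (ho : IsOpen I) (hc : IsPreconnected I)
    (hne : I.Nonempty) :
    ∃ φ : ℝ → ℝ, ContDiff ℝ 1 φ ∧ (∀ t, deriv φ t ≠ 0) ∧ range φ = I := by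
  rcases ho.eq_Ioo_or_Ioi_or_Iio_or_univ hc with ⟨a, b, rfl⟩ | ⟨a, rfl⟩ | ⟨b, rfl⟩ | rfl
  · have hab : 0 < b - a := sub_pos.2 (nonempty_Ioo.1 hne)
    refine ⟨fun t => (b - a) * Real.sigmoid t + a,
      (contDiff_const.mul (contDiff_sigmoid.of_le le_top)).add contDiff_const, fun t => ?_, ?_⟩
    · rw [(((Real.hasDerivAt_sigmoid t).const_mul (b - a)).add_const a).deriv]
      exact mul_ne_zero hab.ne'
        (mul_pos (Real.sigmoid_pos t) (sub_pos.2 (Real.sigmoid_lt_one t))).ne'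
    · rw [show (fun t => (b - a) * Real.sigmoid t + a) = ((b - a) * · + a) ∘ Real.sigmoid from rfl,
        range_comp, Real.range_sigmoid, image_affine_Ioo hab]
      simp
  · refine ⟨fun t => Real.exp t + a, by fun_prop, fun t => ?_, ?_⟩
    · rw [((Real.hasDerivAt_exp t).add_const a).deriv]; exact Real.exp_ne_zero t
    · rw [show (fun t => Real.exp t + a) = (· + a) ∘ Real.exp from rfl, range_comp, Real.range_exp,
        image_add_const_Ioi, zero_add]
  · refine ⟨fun t => b - Real.exp t, by fun_prop, fun t => ?_, ?_⟩
    · rw [((Real.hasDerivAt_exp t).const_sub b).deriv, neg_ne_zero]; exact Real.exp_ne_zero t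
    · rw [show (fun t => b - Real.exp t) = (b - ·) ∘ Real.exp from rfl, range_comp, Real.range_exp,
        image_const_sub_Ioi, sub_zero]
  · exact ⟨id, contDiff_id, fun t => by simp, range_id⟩

section FactorsThrough

variable {E F : Type*} [NormedAddCommGroup E] [NormedSpace ℝ E] [NormedAddCommGroup F]
  [NormedSpace ℝ F]

theorem HasStrictFDerivAt.hasStrictDerivAt_comp_add_smul {g : E → ℝ} {g' : E →L[ℝ] ℝ} {w : E}
    (hg : HasStrictFDerivAt g g' w) (v : E) :
    HasStrictDerivAt (fun s : ℝ => g (w + s • v)) (g' v) 0 := by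
  have hline : HasStrictDerivAt (fun s : ℝ => w + s • v) v 0 := by
    simpa using ((hasStrictDerivAt_id (0 : ℝ)).smul_const v).const_add w
  exact HasStrictFDerivAt.comp_hasStrictDerivAt (l := g) 0 (by simpa using hg) hline

theorem HasStrictFDerivAt.range_mem_nhds {g : E → ℝ} {g' : E →L[ℝ] ℝ} {w : E}
    (hg : HasStrictFDerivAt g g' w) (hg' : g' ≠ 0) : range g ∈ 𝓝 (g w) := by
  obtain ⟨v, hv⟩ : ∃ v, g' v ≠ 0 := by simpa [DFunLike.ne_iff] using hg'
  have hmap := (hg.hasStrictDerivAt_comp_add_smul v).map_nhds_eq hv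
  simp only [zero_smul, add_zero] at hmap
  rw [← hmap]
  exact mem_map.2 (univ_mem' fun s => mem_range_self _)

theorem Function.FactorsThrough.contDiffAt_extend {u : E → F} {g : E → ℝ}
    (hug : u.FactorsThrough g) {w : E} (hu : ContDiffAt ℝ 1 u w) (hg : ContDiffAt ℝ 1 g w)
    (hg' : fderiv ℝ g w ≠ 0) : ContDiffAt ℝ 1 (Function.extend g u 0) (g w) := by
  obtain ⟨v, hv⟩ : ∃ v, fderiv ℝ g w v ≠ 0 := by simpa [DFunLike.ne_iff] using hg'
  set c : ℝ → E := fun s => w + s • v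
  have hc : ContDiff ℝ 1 c := by fun_prop
  have hc0 : c 0 = w := by simp [c]
  have hh : ContDiffAt ℝ 1 (g ∘ c) 0 := by rw [← hc0] at hg; exact hg.comp 0 hc.contDiffAt
  have hh' : HasFDerivAt (g ∘ c) _ 0 :=
    ((hg.hasStrictFDerivAt one_ne_zero).hasStrictDerivAt_comp_add_smul v).hasDerivAt
      |>.hasFDerivAt_equiv hv
  set k := hh.localInverse hh' one_ne_zero
  have hk : ContDiffAt ℝ 1 k (g w) := by
    simpa [c] using hh.to_localInverse hh' one_ne_zero
  have hk0 : k (g w) = 0 := by simpa [c] using hh.localInverse_apply_image hh' one_ne_zero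
  have hright : ∀ᶠ t in 𝓝 (g w), g (c (k t)) = t := by
    have hgc0 : (g ∘ c) 0 = g w := congrArg g hc0
    exact hgc0 ▸ (hh.hasStrictFDerivAt' hh' one_ne_zero).eventually_right_inverse
  have hu' : ContDiffAt ℝ 1 u (c (k (g w))) := by rwa [hk0, hc0]
  refine (hu'.comp (g w) ((hc.contDiffAt (x := k (g w))).comp _ hk)).congr_of_eventuallyEq ?_
  filter_upwards [hright] with t ht
  conv_lhs => rw [← ht]
  exact hug.extend_apply 0 _

theorem Function.FactorsThrough.fderiv_eq_smulRight {u : E → F} {g : E → ℝ}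
    (hug : u.FactorsThrough g) {w : E} (hu : ContDiffAt ℝ 1 u w) (hg : ContDiffAt ℝ 1 g w)
    (hg' : fderiv ℝ g w ≠ 0) :
    fderiv ℝ u w = (fderiv ℝ g w).smulRight (deriv (Function.extend g u 0) (g w)) := by
  have hf := (hug.contDiffAt_extend hu hg hg').differentiableAt one_ne_zero
  have hcomp : u = Function.extend g u 0 ∘ g := funext fun x => (hug.extend_apply 0 x).symm
  conv_lhs => rw [hcomp, fderiv_comp w hf (hg.differentiableAt one_ne_zero)]
  ext v
  simp only [ContinuousLinearMap.comp_apply, ContinuousLinearMap.smulRight_apply,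
    fderiv_eq_smul_deriv]

theorem Function.FactorsThrough.fderiv_apply_eq_zero {u : E → F} {g : E → ℝ}
    (hug : u.FactorsThrough g) {w : E} (hu : ContDiffAt ℝ 1 u w) (hg : ContDiffAt ℝ 1 g w)
    (hg' : fderiv ℝ g w ≠ 0) {v : E} (hv : fderiv ℝ g w v = 0) : fderiv ℝ u w v = 0 := by
  simp [hug.fderiv_eq_smulRight hu hg hg', hv]

theorem Function.FactorsThrough.exists_contDiff_range_subset [PreconnectedSpace E] {u : E → F}
    {g : E → ℝ} (hug : u.FactorsThrough g) (hu : ContDiff ℝ 1 u) (hg : ContDiff ℝ 1 g)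
    (hg' : ∀ w, fderiv ℝ g w ≠ 0) (hu' : ∀ w, fderiv ℝ u w ≠ 0) :
    ∃ γ : ℝ → F, ContDiff ℝ 1 γ ∧ (∀ t, deriv γ t ≠ 0) ∧ range u ⊆ range γ := by
  set f := Function.extend g u 0
  have hf (w : E) : ContDiffAt ℝ 1 f (g w) :=
    hug.contDiffAt_extend hu.contDiffAt hg.contDiffAt (hg' w)
  have hf' (w : E) : deriv f (g w) ≠ 0 := fun h => hu' w <| by
    rw [hug.fderiv_eq_smulRight hu.contDiffAt hg.contDiffAt (hg' w), h,
      ContinuousLinearMap.smulRight_zero]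
  have hopen : IsOpen (range g) := isOpen_iff_mem_nhds.2 <| by
    rintro _ ⟨w, rfl⟩
    exact (hg.contDiffAt.hasStrictFDerivAt one_ne_zero).range_mem_nhds (hg' w)
  obtain ⟨φ, hφ, hφ', hφg⟩ :=
    exists_contDiff_deriv_ne_zero_range_eq hopen (isPreconnected_range hg.continuous)
      (range_nonempty g)
  have hφ_mem (t : ℝ) : φ t ∈ range g := hφg ▸ mem_range_self t
  refine ⟨f ∘ φ, contDiff_iff_contDiffAt.2 fun t => ?_, fun t => ?_, ?_⟩
  · obtain ⟨w, hw⟩ := hφ_mem t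
    exact (hw ▸ hf w).comp t hφ.contDiffAt
  · obtain ⟨w, hw⟩ := hφ_mem t
    rw [deriv.scomp t (hw ▸ (hf w).differentiableAt one_ne_zero)
      (hφ.differentiable one_ne_zero t)]
    exact smul_ne_zero (hφ' t) (hw ▸ hf' w)
  · rintro _ ⟨w, rfl⟩
    obtain ⟨t, ht⟩ : g w ∈ range φ := hφg ▸ mem_range_self w
    exact ⟨t, by simp [f, ht, hug.extend_apply]⟩

end FactorsThrough

theorem LinearMap.ne_zero_of_jointly_injective {K V X Y : Type*} [Field K] [AddCommGroup V]
    [Module K V] [FiniteDimensional K V] [AddCommGroup X] [Module K X] [AddCommGroup Y]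
    [Module K Y] {A : V →ₗ[K] X} {B : V →ₗ[K] Y} {ℓ : V →ₗ[K] K} (hV : 1 < Module.finrank K V)
    (hAB : ∀ v, A v = 0 → B v = 0 → v = 0) (hℓB : ∀ v, ℓ v = 0 → B v = 0) : A ≠ 0 := by
  intro hA
  obtain ⟨v, hv, hv0⟩ := (Submodule.ne_bot_iff _).1 (LinearMap.ker_ne_bot_of_finrank_lt (f := ℓ)
    (by simpa using hV))
  exact hv0 (hAB v (by simp [hA]) (hℓB v hv))

/-- let `S = ψ(ℝ²) ⊂ ℂ² ⊂ ℙ²(ℂ)` be a germ of real surface carrying two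
transverse C¹ foliations `ℱ₁ = {g₁ = const}`, `ℱ₂ = {g₂ = const}` whose leaves are
contained in lines of the pencils `{x = t}` and `{y = t}` (the pencils through
`[0:1:0]` and `[1:0:0]`). Then `S ⊆ C₁ × C₂` for two real curves `C₁ ⊂ ℂ_x`,
`C₂ ⊂ ℂ_y`. -/
theorem stmt_15 (ψ : ℝ × ℝ → ℂ × ℂ) (g₁ g₂ : ℝ × ℝ → ℝ)
    (hψ : ContDiff ℝ 1 ψ) (himm : ∀ w, Function.Injective (fderiv ℝ ψ w))
    (hg₁ : ContDiff ℝ 1 g₁) (hg₂ : ContDiff ℝ 1 g₂)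
    (htrans : ∀ w, LinearIndependent ℝ ![fderiv ℝ g₁ w, fderiv ℝ g₂ w])
    (hleaf₁ : ∀ w w', g₁ w = g₁ w' → (ψ w).1 = (ψ w').1)
    (hleaf₂ : ∀ w w', g₂ w = g₂ w' → (ψ w).2 = (ψ w').2) :
    ∃ C₁ C₂ : Set ℂ, IsRealCurve C₁ ∧ IsRealCurve C₂ ∧
      Set.range ψ ⊆ C₁ ×ˢ C₂ := by
  have hu₁ : ContDiff ℝ 1 fun w => (ψ w).1 := hψ.fst
  have hu₂ : ContDiff ℝ 1 fun w => (ψ w).2 := hψ.snd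
  have hug₁ : (fun w => (ψ w).1).FactorsThrough g₁ := fun w w' => hleaf₁ w w'
  have hug₂ : (fun w => (ψ w).2).FactorsThrough g₂ := fun w w' => hleaf₂ w w'
  have hg₁' (w) : fderiv ℝ g₁ w ≠ 0 := (htrans w).ne_zero 0
  have hg₂' (w) : fderiv ℝ g₂ w ≠ 0 := (htrans w).ne_zero 1
  have hψ' (w v) (h₁ : fderiv ℝ (fun w => (ψ w).1) w v = 0)
      (h₂ : fderiv ℝ (fun w => (ψ w).2) w v = 0) : v = 0 := by
    have hd := hψ.differentiable one_ne_zero w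
    rw [fderiv.fst hd] at h₁
    rw [fderiv.snd hd] at h₂
    exact himm w (by rw [map_zero]; exact Prod.ext h₁ h₂)
  have hdim : 1 < Module.finrank ℝ (ℝ × ℝ) := by simp
  have hu₁' (w) : fderiv ℝ (fun w => (ψ w).1) w ≠ 0 := fun h =>
    LinearMap.ne_zero_of_jointly_injective hdim (hψ' w)
      (fun _ => hug₂.fderiv_apply_eq_zero hu₂.contDiffAt hg₂.contDiffAt (hg₂' w)) (by rw [h]; rfl)
  have hu₂' (w) : fderiv ℝ (fun w => (ψ w).2) w ≠ 0 := fun h =>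
    LinearMap.ne_zero_of_jointly_injective hdim (fun v h₂ h₁ => hψ' w v h₁ h₂)
      (fun _ => hug₁.fderiv_apply_eq_zero hu₁.contDiffAt hg₁.contDiffAt (hg₁' w)) (by rw [h]; rfl)
  obtain ⟨γ₁, hγ₁, hγ₁', hu₁γ₁⟩ := hug₁.exists_contDiff_range_subset hu₁ hg₁ hg₁' hu₁'
  obtain ⟨γ₂, hγ₂, hγ₂', hu₂γ₂⟩ := hug₂.exists_contDiff_range_subset hu₂ hg₂ hg₂' hu₂'
  refine ⟨range γ₁, range γ₂, isRealCurve_range hγ₁ hγ₁', isRealCurve_range hγ₂ hγ₂', ?_⟩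
  rintro _ ⟨w, rfl⟩
  exact ⟨hu₁γ₁ (mem_range_self w), hu₂γ₂ (mem_range_self w)⟩
end

section
/- Let C₁, C₂ ⊂ ℂ be germs at 0 of C² real curves with equations x₂ = a₁x₁² + o(x₁²) and y₂ = a₂y₁² + o(y₁²) respectively, and let S = C₁ × C₂ ⊂ ℂ². If the critical circle of T_pS (the set of slopes λ ∈ ℙ¹(ℂ) of complex lines not transverse to T_pS) is the same for all p ∈ S near the origin, then a₁ = a₂ = 0; more precisely, if a₂ ≠ 0 then at the point (0, ε) with ε = ε₁ + iε₂ ∈ C₂, ε₁ ≠ 0 small, the tangent plane of S contains a vector of complex slope 1 + a₂ε₁i + o(ε₁) ∉ ℝ, while the critical circle at the origin is ℙ¹(ℝ). -/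
/-- The (finite part of the) critical circle of a real 2-plane `P ⊂ ℂ²`: the slopes
`λ ∈ ℂ` of complex lines through `0` which are not transverse to `P`. -/
noncomputable def critSet (P : Submodule ℝ (ℂ × ℂ)) : Set ℂ :=
  {l : ℂ | lineSlope l ⊔ P ≠ ⊤}

/-- The tangent plane of the surface `S = C₁ × C₂ = {x₂ = r₁(x₁), y₂ = r₂(y₁)}`
at the point of parameters `(x₁, y₁)`. -/
noncomputable def tangentPlane (r₁ r₂ : ℝ → ℝ) (x₁ y₁ : ℝ) : Submodule ℝ (ℂ × ℂ) :=
  Submodule.span ℝ {((1 + Complex.I * (deriv r₁ x₁), 0) : ℂ × ℂ),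
    ((0, 1 + Complex.I * (deriv r₂ y₁)) : ℂ × ℂ)}

lemma mem_lineSlope (l : ℂ) (v : ℂ × ℂ) : v ∈ lineSlope l ↔ v.2 = l * v.1 := Iff.rfl

lemma solve_complex (u v W : ℂ) (hd : u.im * v.re - u.re * v.im ≠ 0) :
    ∃ s t : ℝ, (s : ℂ) * u + (t : ℂ) * v = W := by
  set d := u.im * v.re - u.re * v.im with hdd
  refine ⟨(W.im * v.re - W.re * v.im) / d, (u.im * W.re - u.re * W.im) / d, ?_⟩
  apply Complex.ext <;>
    simp only [Complex.add_re, Complex.add_im, Complex.mul_re, Complex.mul_im,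
      Complex.ofReal_re, Complex.ofReal_im] <;>
    field_simp <;> ring

lemma sup_eq_top_iff (l α β : ℂ) (hβ : β ≠ 0) :
    lineSlope l ⊔ Submodule.span ℝ {((α, 0) : ℂ × ℂ), ((0, β) : ℂ × ℂ)} = ⊤ ↔
      (l * α).im * β.re - (l * α).re * β.im ≠ 0 := by
  constructor
  · intro htop him
    have hmem : ((0, Complex.I * β) : ℂ × ℂ) ∈
        lineSlope l ⊔ Submodule.span ℝ {((α, 0) : ℂ × ℂ), ((0, β) : ℂ × ℂ)} := by
      rw [htop]; trivial
    rw [Submodule.mem_sup] at hmem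
    obtain ⟨y, hy, z, hz, hyz⟩ := hmem
    rw [Submodule.mem_span_pair] at hz
    obtain ⟨s, t, hst⟩ := hz
    rw [mem_lineSlope] at hy
    have h1 : y.1 + (s : ℂ) * α = 0 := by
      have := congrArg Prod.fst hyz
      rw [← hst] at this
      simpa [Complex.real_smul] using this
    have h2 : l * y.1 + (t : ℂ) * β = Complex.I * β := by
      have := congrArg Prod.snd hyz
      rw [← hst] at this
      simpa [Complex.real_smul, hy] using this
    have h2' : (t : ℂ) * β - (s : ℂ) * (l * α) = Complex.I * β := by
      linear_combination h2 - l * h1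
    have hre := congrArg Complex.re h2'
    have him2 := congrArg Complex.im h2'
    simp only [Complex.sub_re, Complex.sub_im, Complex.mul_re, Complex.mul_im,
      Complex.ofReal_re, Complex.ofReal_im, Complex.I_re, Complex.I_im] at hre him2
    simp only [Complex.mul_re, Complex.mul_im] at him
    have hkey : β.re ^ 2 + β.im ^ 2 = 0 := by
      linear_combination β.im * hre - β.re * him2 - s * him
    have hpos := Complex.normSq_pos.mpr hβ
    rw [Complex.normSq_apply] at hpos
    nlinarith
  · intro hd
    rw [eq_top_iff]
    rintro ⟨w₁, w₂⟩ -
    obtain ⟨s, t, hst⟩ := solve_complex (l * α) β (l * w₁ - w₂) hd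
    rw [Submodule.mem_sup]
    refine ⟨(w₁ - (s : ℂ) * α, l * (w₁ - (s : ℂ) * α)), rfl,
      s • ((α, 0) : ℂ × ℂ) + (-t) • ((0, β) : ℂ × ℂ),
      Submodule.mem_span_pair.mpr ⟨s, -t, rfl⟩, ?_⟩
    have hc : ((-t : ℝ) : ℂ) = -(t : ℂ) := by push_cast; ring
    apply Prod.ext <;> simp [Complex.real_smul, hc] <;> linear_combination -hst

lemma critSet_eq (a b : ℝ) :
    critSet (Submodule.span ℝ {((1 + Complex.I * a, 0) : ℂ × ℂ),
        ((0, 1 + Complex.I * b) : ℂ × ℂ)}) =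
      {l : ℂ | l.im * (1 + a * b) + l.re * (a - b) = 0} := by
  have hβ : (1 + Complex.I * (b : ℂ)) ≠ 0 := by
    intro h
    have := congrArg Complex.re h
    simp [Complex.add_re, Complex.mul_re] at this
  have hid : ∀ l : ℂ,
      (l * (1 + Complex.I * (a : ℂ))).im * (1 + Complex.I * (b : ℂ)).re -
        (l * (1 + Complex.I * (a : ℂ))).re * (1 + Complex.I * (b : ℂ)).im =
      l.im * (1 + a * b) + l.re * (a - b) := by
    intro l
    simp [Complex.mul_re, Complex.mul_im]
    ring
  ext l
  show lineSlope l ⊔ _ ≠ ⊤ ↔ _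
  rw [Ne, sup_eq_top_iff l _ _ hβ, not_ne_iff, hid l]
  rfl


/-- let `C₁ = {x₂ = a₁x₁² + o(x₁²)}`, `C₂ = {y₂ = a₂y₁² + o(y₁²)}` be
germs of C² real curves and `S = C₁ × C₂ ⊂ ℂ²`. The critical circle of `T₀S` is
`ℙ¹(ℝ)`, and if the critical circle of `T_pS` is the same for all `p ∈ S` near the
origin, then `a₁ = a₂ = 0`. -/
theorem stmt_16 (r₁ r₂ : ℝ → ℝ) (a₁ a₂ : ℝ)
    (h₁ : ContDiff ℝ 2 r₁) (h₂ : ContDiff ℝ 2 r₂)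
    (h₁0 : r₁ 0 = 0) (h₂0 : r₂ 0 = 0)
    (h₁d : deriv r₁ 0 = 0) (h₂d : deriv r₂ 0 = 0)
    (h₁dd : deriv (deriv r₁) 0 = 2 * a₁) (h₂dd : deriv (deriv r₂) 0 = 2 * a₂)
    (hconst : ∃ δ > 0, ∀ x₁ y₁ x₁' y₁' : ℝ,
      |x₁| < δ → |y₁| < δ → |x₁'| < δ → |y₁'| < δ →
      critSet (tangentPlane r₁ r₂ x₁ y₁) = critSet (tangentPlane r₁ r₂ x₁' y₁')) :
    critSet (tangentPlane r₁ r₂ 0 0) = {l : ℂ | l.im = 0} ∧ a₁ = 0 ∧ a₂ = 0 := by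
  have tp : ∀ x y : ℝ, critSet (tangentPlane r₁ r₂ x y) =
      {l : ℂ | l.im * (1 + deriv r₁ x * deriv r₂ y) + l.re * (deriv r₁ x - deriv r₂ y) = 0} := by
    intro x y
    unfold tangentPlane
    exact critSet_eq _ _
  have h00 : critSet (tangentPlane r₁ r₂ 0 0) = {l : ℂ | l.im = 0} := by
    rw [tp, h₁d, h₂d]
    ext l
    simp
  obtain ⟨δ, hδ, hc⟩ := hconst
  have h0δ : |(0 : ℝ)| < δ := by simpa using hδ
  have key₁ : ∀ c : ℝ, |c| < δ → deriv r₁ c = 0 := by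
    intro c hcδ
    have heq : critSet (tangentPlane r₁ r₂ c 0) = {l : ℂ | l.im = 0} := by
      rw [hc c 0 0 0 hcδ h0δ h0δ h0δ, h00]
    rw [tp, h₂d] at heq
    have h1 : (1 : ℂ) ∈ {l : ℂ | l.im * (1 + deriv r₁ c * 0) + l.re * (deriv r₁ c - 0) = 0} := by
      rw [heq]; simp
    simpa using h1
  have key₂ : ∀ c : ℝ, |c| < δ → deriv r₂ c = 0 := by
    intro c hcδ
    have heq : critSet (tangentPlane r₁ r₂ 0 c) = {l : ℂ | l.im = 0} := by
      rw [hc 0 c 0 0 h0δ hcδ h0δ h0δ, h00]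
    rw [tp, h₁d] at heq
    have h1 : (1 : ℂ) ∈ {l : ℂ | l.im * (1 + 0 * deriv r₂ c) + l.re * (0 - deriv r₂ c) = 0} := by
      rw [heq]; simp
    simpa using h1
  have hev₁ : deriv r₁ =ᶠ[nhds (0 : ℝ)] (fun _ => (0 : ℝ)) := by
    filter_upwards [Metric.ball_mem_nhds (0 : ℝ) hδ] with c hcb
    exact key₁ c (by simpa [Real.dist_eq] using hcb)
  have hev₂ : deriv r₂ =ᶠ[nhds (0 : ℝ)] (fun _ => (0 : ℝ)) := by
    filter_upwards [Metric.ball_mem_nhds (0 : ℝ) hδ] with c hcb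
    exact key₂ c (by simpa [Real.dist_eq] using hcb)
  have hd₁ : deriv (deriv r₁) 0 = 0 := by rw [hev₁.deriv_eq]; simp
  have hd₂ : deriv (deriv r₂) 0 = 0 := by rw [hev₂.deriv_eq]; simp
  refine ⟨h00, by linarith [h₁dd.symm.trans hd₁], by linarith [h₂dd.symm.trans hd₂]⟩
end
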